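/- arXiv:2210.16576 — 2 statements merged into one kernel-verified Lean document; each statement's English description precedes it below -/
import Mathlib

section
/- Let L, M, N be idempotent linearly ordered monoids and let i₁ : L → M, i₂ : L → N be embeddings. Then the following are equivalent: (1) there exist a linearly ordered monoid D (not necessarily idempotent) and embeddings j₁ : M → D, j₂ : N → D with j₁ ∘ i₁ = j₂ ∘ i₂; (2) there exist an idempotent linearly ordered monoid D′ and embeddings k₁ : M → D′, k₂ : N → D′ with k₁ ∘ i₁ = k₂ ∘ i₂. -/
universe u

/-- A linearly ordered monoid: a monoid with a linear order in which
multiplication is monotone in each argument. -/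
structure LOM : Type (u + 1) where
  carrier : Type u
  mul : carrier → carrier → carrier
  one : carrier
  le : carrier → carrier → Prop
  mul_assoc : ∀ a b c, mul (mul a b) c = mul a (mul b c)
  one_mul : ∀ a, mul one a = a
  mul_one : ∀ a, mul a one = a
  le_refl : ∀ a, le a a
  le_trans : ∀ a b c, le a b → le b c → le a c
  le_antisymm : ∀ a b, le a b → le b a → a = b
  le_total : ∀ a b, le a b ∨ le b a
  mono : ∀ a b c d, le a b → le (mul (mul c a) d) (mul (mul c b) d)

/-- A linearly ordered monoid is idempotent if every element is idempotent. -/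
def LOM.Idem (A : LOM) : Prop := ∀ a, A.mul a a = a

/-- A homomorphism of linearly ordered monoids: an order-preserving monoid
homomorphism. -/
def LOM.IsHom (A B : LOM) (f : A.carrier → B.carrier) : Prop :=
  (∀ a b, f (A.mul a b) = B.mul (f a) (f b)) ∧ f A.one = B.one ∧
    ∀ a b, A.le a b → B.le (f a) (f b)

/-- An embedding of linearly ordered monoids: an injective homomorphism. -/
def LOM.IsEmb (A B : LOM) (f : A.carrier → B.carrier) : Prop :=
  LOM.IsHom A B f ∧ Function.Injective f


set_option linter.unusedVariables false

namespace LOMAux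

variable (D : LOM.{u})

lemma mul_le_mul_left {a b : D.carrier} (c : D.carrier) (h : D.le a b) :
    D.le (D.mul c a) (D.mul c b) := by
  have := D.mono a b c D.one h
  simpa [D.mul_one] using this

lemma mul_le_mul_right {a b : D.carrier} (c : D.carrier) (h : D.le a b) :
    D.le (D.mul a c) (D.mul b c) := by
  have := D.mono a b D.one c h
  simpa [D.one_mul] using this

lemma keyT {x y z : D.carrier} (h1 : D.le D.one (D.mul x y))
    (h2 : D.le (D.mul y z) D.one) : D.le z x := by
  have hz : D.le z (D.mul (D.mul x y) z) := by
    have := mul_le_mul_right D z h1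
    simpa [D.one_mul] using this
  have hx : D.le (D.mul x (D.mul y z)) (D.mul x D.one) := mul_le_mul_left D x h2
  rw [D.mul_one] at hx
  rw [D.mul_assoc] at hz
  exact D.le_trans _ _ _ hz hx

lemma keyT' {x y z : D.carrier} (h1 : D.le (D.mul x y) D.one)
    (h2 : D.le D.one (D.mul y z)) : D.le x z := by
  have hx : D.le x (D.mul x (D.mul y z)) := by
    have := mul_le_mul_left D x h2
    simpa [D.mul_one] using this
  have hz : D.le (D.mul (D.mul x y) z) (D.mul D.one z) := mul_le_mul_right D z h1
  rw [D.one_mul] at hz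
  rw [← D.mul_assoc] at hx
  exact D.le_trans _ _ _ hx hz

noncomputable def mmax (x y : D.carrier) : D.carrier := by
  classical exact if D.le x y then y else x

noncomputable def mmin (x y : D.carrier) : D.carrier := by
  classical exact if D.le x y then x else y

lemma le_mmax_left (x y : D.carrier) : D.le x (mmax D x y) := by
  unfold mmax; split
  · assumption
  · exact D.le_refl x

lemma le_mmax_right (x y : D.carrier) : D.le y (mmax D x y) := by
  unfold mmax; split
  · exact D.le_refl y
  · exact (D.le_total x y).resolve_left ‹_›

lemma mmax_le {x y z : D.carrier} (hx : D.le x z) (hy : D.le y z) :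
    D.le (mmax D x y) z := by
  unfold mmax; split <;> assumption

lemma mmin_le_left (x y : D.carrier) : D.le (mmin D x y) x := by
  unfold mmin; split
  · exact D.le_refl x
  · exact (D.le_total x y).resolve_left ‹_›

lemma mmin_le_right (x y : D.carrier) : D.le (mmin D x y) y := by
  unfold mmin; split
  · assumption
  · exact D.le_refl y

lemma le_mmin {x y z : D.carrier} (hx : D.le z x) (hy : D.le z y) :
    D.le z (mmin D x y) := by
  unfold mmin; split <;> assumption

lemma mmax_eq_right {x y : D.carrier} (h : D.le x y) : mmax D x y = y := by
  unfold mmax; rw [if_pos h]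

lemma mmax_eq_left {x y : D.carrier} (h : D.le y x) : mmax D x y = x := by
  unfold mmax; split
  · exact D.le_antisymm _ _ h ‹_› ▸ rfl
  · rfl

lemma mmin_eq_left {x y : D.carrier} (h : D.le x y) : mmin D x y = x := by
  unfold mmin; rw [if_pos h]

lemma mmin_eq_right {x y : D.carrier} (h : D.le y x) : mmin D x y = y := by
  unfold mmin; split
  · exact D.le_antisymm _ _ ‹_› h
  · rfl

lemma mmax_assoc (x y z : D.carrier) :
    mmax D (mmax D x y) z = mmax D x (mmax D y z) := by
  apply D.le_antisymm
  · apply mmax_le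
    · apply mmax_le
      · exact le_mmax_left D x (mmax D y z)
      · exact D.le_trans _ _ _ (le_mmax_left D y z) (le_mmax_right D x _)
    · exact D.le_trans _ _ _ (le_mmax_right D y z) (le_mmax_right D x _)
  · apply mmax_le
    · exact D.le_trans _ _ _ (le_mmax_left D x y) (le_mmax_left D _ z)
    · apply mmax_le
      · exact D.le_trans _ _ _ (le_mmax_right D x y) (le_mmax_left D _ z)
      · exact le_mmax_right D _ z

lemma mmin_assoc (x y z : D.carrier) :
    mmin D (mmin D x y) z = mmin D x (mmin D y z) := by
  apply D.le_antisymm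
  · apply le_mmin
    · exact D.le_trans _ _ _ (mmin_le_left D _ z) (mmin_le_left D x y)
    · apply le_mmin
      · exact D.le_trans _ _ _ (mmin_le_left D _ z) (mmin_le_right D x y)
      · exact mmin_le_right D _ z
  · apply le_mmin
    · apply le_mmin
      · exact mmin_le_left D x _
      · exact D.le_trans _ _ _ (mmin_le_right D x _) (mmin_le_left D y z)
    · exact D.le_trans _ _ _ (mmin_le_right D x _) (mmin_le_right D y z)

noncomputable def op (x y : D.carrier) : D.carrier := by
  classical exact if D.le D.one (D.mul x y) then mmax D x y else mmin D x y

lemma op_pos {x y : D.carrier} (h : D.le D.one (D.mul x y)) :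
    op D x y = mmax D x y := by unfold op; rw [if_pos h]

lemma op_neg {x y : D.carrier} (h : ¬ D.le D.one (D.mul x y)) :
    op D x y = mmin D x y := by unfold op; rw [if_neg h]

lemma op_self (x : D.carrier) : op D x x = x := by
  unfold op mmax mmin
  split <;> (split <;> try rfl) <;> rfl

lemma op_one_left (y : D.carrier) : op D D.one y = y := by
  unfold op; rw [D.one_mul]
  split
  · exact mmax_eq_right D ‹_›
  · exact mmin_eq_right D ((D.le_total _ _).resolve_left ‹_›)

lemma op_one_right (y : D.carrier) : op D y D.one = y := by
  unfold op; rw [D.mul_one]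
  split
  · exact mmax_eq_left D ‹_›
  · exact mmin_eq_left D ((D.le_total _ _).resolve_left ‹_›)

lemma op_mono_right {a b : D.carrier} (c : D.carrier) (h : D.le a b) :
    D.le (op D c a) (op D c b) := by
  have hab : D.le (D.mul c a) (D.mul c b) := mul_le_mul_left D c h
  by_cases p : D.le D.one (D.mul c a)
  · have q : D.le D.one (D.mul c b) := D.le_trans _ _ _ p hab
    rw [op_pos D p, op_pos D q]
    exact mmax_le D (le_mmax_left D c b) (D.le_trans _ _ _ h (le_mmax_right D c b))
  · rw [op_neg D p]
    by_cases q : D.le D.one (D.mul c b)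
    · rw [op_pos D q]
      exact D.le_trans _ _ _ (mmin_le_left D c a) (le_mmax_left D c b)
    · rw [op_neg D q]
      exact le_mmin D (mmin_le_left D c a) (D.le_trans _ _ _ (mmin_le_right D c a) h)

lemma op_mono_left {a b : D.carrier} (c : D.carrier) (h : D.le a b) :
    D.le (op D a c) (op D b c) := by
  have hab : D.le (D.mul a c) (D.mul b c) := mul_le_mul_right D c h
  by_cases p : D.le D.one (D.mul a c)
  · have q : D.le D.one (D.mul b c) := D.le_trans _ _ _ p hab
    rw [op_pos D p, op_pos D q]
    exact mmax_le D (D.le_trans _ _ _ h (le_mmax_left D b c)) (le_mmax_right D b c)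
  · rw [op_neg D p]
    by_cases q : D.le D.one (D.mul b c)
    · rw [op_pos D q]
      exact D.le_trans _ _ _ (mmin_le_right D a c) (le_mmax_right D b c)
    · rw [op_neg D q]
      exact le_mmin D (D.le_trans _ _ _ (mmin_le_left D a c) h) (mmin_le_right D a c)

lemma op_assoc (x y z : D.carrier) : op D (op D x y) z = op D x (op D y z) := by
  by_cases p : D.le D.one (D.mul x y) <;> by_cases q : D.le D.one (D.mul y z)
  · -- p, q
    rw [op_pos D p, op_pos D q]
    have hs1 : D.le D.one (D.mul (mmax D x y) z) :=
      D.le_trans _ _ _ q (mul_le_mul_right D z (le_mmax_right D x y))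
    have hs2 : D.le D.one (D.mul x (mmax D y z)) :=
      D.le_trans _ _ _ p (mul_le_mul_left D x (le_mmax_left D y z))
    rw [op_pos D hs1, op_pos D hs2, mmax_assoc]
  · -- p, ¬q
    have q' : D.le (D.mul y z) D.one := (D.le_total _ _).resolve_left q
    have hzx : D.le z x := keyT D p q'
    rw [op_pos D p, op_neg D q]
    by_cases hxy : D.le x y
    · rw [mmax_eq_right D hxy, mmin_eq_right D (D.le_trans _ _ _ hzx hxy)]
      have hs2 : ¬ D.le D.one (D.mul x z) := fun h =>
        q (D.le_trans _ _ _ h (mul_le_mul_right D z hxy))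
      rw [op_neg D q, op_neg D hs2, mmin_eq_right D (D.le_trans _ _ _ hzx hxy),
        mmin_eq_right D hzx]
    · have hyx : D.le y x := (D.le_total x y).resolve_left hxy
      rw [mmax_eq_left D hyx]
      by_cases hyz : D.le y z
      · rw [mmin_eq_left D hyz]
        have hs1 : D.le D.one (D.mul x z) :=
          D.le_trans _ _ _ p (mul_le_mul_left D x hyz)
        rw [op_pos D hs1, op_pos D p, mmax_eq_left D hzx, mmax_eq_left D hyx]
      · rw [mmin_eq_right D ((D.le_total y z).resolve_left hyz)]
  · -- ¬p, q
    have p' : D.le (D.mul x y) D.one := (D.le_total _ _).resolve_left p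
    have hxz : D.le x z := keyT' D p' q
    rw [op_neg D p, op_pos D q]
    by_cases hyz : D.le y z
    · rw [mmax_eq_right D hyz]
      by_cases hxy : D.le x y
      · rw [mmin_eq_left D hxy]
      · have hyx : D.le y x := (D.le_total x y).resolve_left hxy
        rw [mmin_eq_right D hyx]
        have hs2 : D.le D.one (D.mul x z) :=
          D.le_trans _ _ _ q (mul_le_mul_right D z hyx)
        rw [op_pos D q, op_pos D hs2, mmax_eq_right D hyz, mmax_eq_right D hxz]
    · have hzy : D.le z y := (D.le_total y z).resolve_left hyz
      rw [mmax_eq_left D hzy]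
      have hxy : D.le x y := D.le_trans _ _ _ hxz hzy
      rw [mmin_eq_left D hxy]
      have hs1 : ¬ D.le D.one (D.mul x z) := fun h =>
        p (D.le_trans _ _ _ h (mul_le_mul_left D x hzy))
      rw [op_neg D hs1, op_neg D p, mmin_eq_left D hxz, mmin_eq_left D hxy]
  · -- ¬p, ¬q
    rw [op_neg D p, op_neg D q]
    have hs1 : ¬ D.le D.one (D.mul (mmin D x y) z) := fun h =>
      q (D.le_trans _ _ _ h (mul_le_mul_right D z (mmin_le_right D x y)))
    have hs2 : ¬ D.le D.one (D.mul x (mmin D y z)) := fun h =>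
      p (D.le_trans _ _ _ h (mul_le_mul_left D x (mmin_le_left D y z)))
    rw [op_neg D hs1, op_neg D hs2, mmin_assoc]

lemma op_of_idem {x y : D.carrier} (hx : D.mul x x = x) (hy : D.mul y y = y) :
    op D x y = D.mul x y := by
  by_cases p : D.le D.one (D.mul x y)
  · rw [op_pos D p]
    apply D.le_antisymm
    · apply mmax_le
      · -- x ≤ xy
        have := mul_le_mul_left D x p
        rw [D.mul_one, ← D.mul_assoc, hx] at this
        exact this
      · -- y ≤ xy
        have := mul_le_mul_right D y p
        rw [D.one_mul, D.mul_assoc, hy] at this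
        exact this
    · rcases D.le_total x y with h | h
      · have : D.le (D.mul x y) (D.mul y y) := mul_le_mul_right D y h
        rw [hy] at this
        exact D.le_trans _ _ _ this (le_mmax_right D x y)
      · have : D.le (D.mul x y) (D.mul x x) := mul_le_mul_left D x h
        rw [hx] at this
        exact D.le_trans _ _ _ this (le_mmax_left D x y)
  · have p' : D.le (D.mul x y) D.one := (D.le_total _ _).resolve_left p
    rw [op_neg D p]
    apply D.le_antisymm
    · rcases D.le_total x y with h | h
      · have : D.le (D.mul x x) (D.mul x y) := mul_le_mul_left D x h
        rw [hx] at this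
        exact D.le_trans _ _ _ (mmin_le_left D x y) this
      · have : D.le (D.mul y y) (D.mul x y) := mul_le_mul_right D y h
        rw [hy] at this
        exact D.le_trans _ _ _ (mmin_le_right D x y) this
    · apply le_mmin
      · have := mul_le_mul_left D x p'
        rw [D.mul_one, ← D.mul_assoc, hx] at this
        exact this
      · have := mul_le_mul_right D y p'
        rw [D.one_mul, D.mul_assoc, hy] at this
        exact this

noncomputable def idemize : LOM.{u} where
  carrier := D.carrier
  mul := op D
  one := D.one
  mul_assoc := op_assoc D
  one_mul := op_one_left D
  mul_one := op_one_right D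
  le := D.le
  le_refl := D.le_refl
  le_trans := D.le_trans
  le_antisymm := D.le_antisymm
  le_total := D.le_total
  mono := fun a b c d h =>
    op_mono_left D d (op_mono_right D c h)

lemma idemize_idem : (idemize D).Idem := fun a => op_self D a

end LOMAux

namespace LOMAux

lemma emb_idemize (D M : LOM.{u}) (hM : M.Idem) (j : M.carrier → D.carrier)
    (hj : LOM.IsEmb M D j) : LOM.IsEmb M (idemize D) j := by
  obtain ⟨⟨hmul, hone, hle⟩, hinj⟩ := hj
  refine ⟨⟨fun a b => ?_, hone, hle⟩, hinj⟩
  show j (M.mul a b) = op D (j a) (j b)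
  have ha : D.mul (j a) (j a) = j a := by rw [← hmul, hM a]
  have hb : D.mul (j b) (j b) = j b := by rw [← hmul, hM b]
  rw [op_of_idem D ha hb, hmul]

end LOMAux

/-- A span of idempotent linearly ordered monoids has an amalgam among
linearly ordered monoids if and only if it has an amalgam among idempotent
linearly ordered monoids. -/
theorem stmt_17 (L M N : LOM.{u}) (hL : L.Idem) (hM : M.Idem) (hN : N.Idem)
    (i₁ : L.carrier → M.carrier) (i₂ : L.carrier → N.carrier)
    (hi₁ : LOM.IsEmb L M i₁) (hi₂ : LOM.IsEmb L N i₂) :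
    (∃ (D : LOM.{u}) (j₁ : M.carrier → D.carrier) (j₂ : N.carrier → D.carrier),
        LOM.IsEmb M D j₁ ∧ LOM.IsEmb N D j₂ ∧ j₁ ∘ i₁ = j₂ ∘ i₂) ↔
    (∃ (D' : LOM.{u}) (k₁ : M.carrier → D'.carrier) (k₂ : N.carrier → D'.carrier),
        D'.Idem ∧ LOM.IsEmb M D' k₁ ∧ LOM.IsEmb N D' k₂ ∧ k₁ ∘ i₁ = k₂ ∘ i₂) := by
  constructor
  · rintro ⟨D, j₁, j₂, hj₁, hj₂, hcomp⟩
    exact ⟨LOMAux.idemize D, j₁, j₂, LOMAux.idemize_idem D,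
      LOMAux.emb_idemize D M hM j₁ hj₁, LOMAux.emb_idemize D N hN j₂ hj₂, hcomp⟩
  · rintro ⟨D', k₁, k₂, _, h1, h2, h3⟩
    exact ⟨D', k₁, k₂, h1, h2, h3⟩
end

section
/- Let E be an idempotent distributive ℓ-monoid with identity e, and let x, b, c ∈ E satisfy x < e < c, b < e, x·c = x, c·x = x, c·b = c, and b·c = b. Then x < b and x·b = b·x = x. -/
/-- In an idempotent distributive ℓ-monoid, if `x < 1 < c`, `b < 1`,
`x*c = c*x = x`, `c*b = c` and `b*c = b`, then `x < b` and
`x*b = b*x = x`. -/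
theorem stmt_18 {E : Type*} [Monoid E] [DistribLattice E]
    (hjoin : ∀ a b c d : E, a * (b ⊔ c) * d = a * b * d ⊔ a * c * d)
    (hmeet : ∀ a b c d : E, a * (b ⊓ c) * d = a * b * d ⊓ a * c * d)
    (hidem : ∀ a : E, a * a = a)
    (x b c : E) (hx : x < 1) (hc : (1 : E) < c) (hb : b < 1)
    (h1 : x * c = x) (h2 : c * x = x) (h3 : c * b = c) (h4 : b * c = b) :
    x < b ∧ x * b = x ∧ b * x = x := by
  -- monotonicity of multiplication
  have mono : ∀ u a b v : E, a ≤ b → u * a * v ≤ u * b * v := by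
    intro u a b' v hab
    have : u * (a ⊔ b') * v = u * a * v ⊔ u * b' * v := hjoin u a b' v
    rw [sup_eq_right.mpr hab] at this
    exact le_sup_left.trans_eq this.symm
  have monoL : ∀ a b v : E, a ≤ b → a * v ≤ b * v := by
    intro a b' v hab
    simpa using mono 1 a b' v hab
  have monoR : ∀ u a b : E, a ≤ b → u * a ≤ u * b := by
    intro u a b' hab
    simpa using mono u a b' 1 hab
  -- for p, q ≤ 1 : p * q = p ⊓ q
  have key : ∀ p q : E, p ≤ 1 → q ≤ 1 → p * q = p ⊓ q := by
    intro p q hp hq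
    apply le_antisymm
    · exact le_inf (by simpa using monoR p q 1 hq) (by simpa using monoL p 1 q hp)
    · calc p ⊓ q = (p ⊓ q) * (p ⊓ q) := (hidem _).symm
        _ ≤ p * q := le_trans (monoL _ p _ inf_le_left) (monoR p _ q inf_le_right)
  have hxb : x * b = x := by
    rw [← h1, mul_assoc, h3]
  have hinf : x ⊓ b = x := by rw [← key x b hx.le hb.le, hxb]
  have hbx : b * x = x := by rw [key b x hb.le hx.le, inf_comm, hinf]
  have hne : x ≠ b := by
    rintro rfl
    exact absurd (h2.symm.trans h3) (ne_of_lt (hx.trans hc))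
  exact ⟨lt_of_le_of_ne (inf_eq_left.mp hinf) hne, hxb, hbx⟩
end
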